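/- arXiv:0706.4281 — 2 statements merged into one kernel-verified Lean document; each statement's English description precedes it below -/
import Mathlib

section
/- Let ℜ = (S,(𝒦,𝒢),(X,ℬ),(ℱ,𝒯)) be a Riesz system, Z a uniform commutative monoid, and ℓ : ℱ → Z an ℰ-additive map with ℓ(0)=0. Then for each B∈ℬ, if g is a sequence in ℱ_B such that g_m and g_n are ℰ-separated for all m,n∈ℕ with m≠n, then every finite sum ∑_{j∈J} ℓ(g_j) (J a finite subset of ℕ) belongs to the image ℓ(ℱ_B). -/
open Filter Set Topology
open scoped Pointwise

universe u v w

/-- A member of `unif M`: a closed, translation-invariant, symmetric entourage of the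
uniform commutative monoid `M`. -/
def IsUnifEnt (M : Type*) [AddCommMonoid M] [UniformSpace M] (W : Set (M × M)) : Prop :=
  W ∈ uniformity M ∧ IsClosed W ∧
    (∀ p ∈ W, ∀ t : M, (p.1 + t, p.2 + t) ∈ W) ∧ ∀ p ∈ W, (p.2, p.1) ∈ W

/-- `f` is supported by `α` (written `f ≺ α`): `f` vanishes off some `κ ∈ 𝒦` with `κ ⊆ α`. -/
def SupportedBy {S : Type u} {X : Type v} [Zero X]
    (𝒦 : Set (Set S)) (f : S → X) (α : Set S) : Prop :=
  ∃ κ ∈ 𝒦, κ ⊆ α ∧ ∀ s ∉ κ, f s = 0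

/-- `f` equals `x` over `α`: `f` is identically `x` on some `γ ∈ 𝒢` containing `α`. -/
def EqualsOver {S : Type u} {X : Type v}
    (𝒢 : Set (Set S)) (f : S → X) (x : X) (α : Set S) : Prop :=
  ∃ γ ∈ 𝒢, α ⊆ γ ∧ ∀ s ∈ γ, f s = x

/-- `ℱ_B`: members of `ℱ` with range contained in `B`. -/
def FB {S : Type u} {X : Type v} (ℱ : Set (S → X)) (B : Set X) : Set (S → X) :=
  {f | f ∈ ℱ ∧ Set.range f ⊆ B}

/-- the `ℬ`-hull of `x`: intersection of all members of `ℬ` containing `x`. -/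
def BHull {X : Type v} (ℬ : Set (Set X)) (x : X) : Set X :=
  ⋂₀ {B | B ∈ ℬ ∧ x ∈ B}

/-- the `ℬ`-hull of a subset `A` of `X`. -/
def BHullS {X : Type v} (ℬ : Set (Set X)) (A : Set X) : Set X :=
  ⋂₀ {B | B ∈ ℬ ∧ A ⊆ B}

/-- A field of subsets of `S`. -/
def IsSetField {S : Type u} (ℰ : Set (Set S)) : Prop :=
  Set.univ ∈ ℰ ∧ (∀ A ∈ ℰ, Aᶜ ∈ ℰ) ∧ ∀ A ∈ ℰ, ∀ B ∈ ℰ, A ∪ B ∈ ℰ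

/-- `ℰ`: the smallest field of subsets of `S` containing `𝒦 ∪ 𝒢`. -/
def genField {S : Type u} (𝒦 𝒢 : Set (Set S)) : Set (Set S) :=
  ⋂₀ {ℰ | 𝒦 ∪ 𝒢 ⊆ ℰ ∧ IsSetField ℰ}

/-- A Riesz system `(S,(𝒦,𝒢),(X,ℬ),(ℱ,𝒯))` (Assumptions 2.3 of the paper). -/
structure RieszSystem {S : Type u} {X : Type v} [AddCommMonoid X] [UniformSpace X]
    (𝒦 𝒢 : Set (Set S)) (ℬ : Set (Set X)) (ℱ : Set (S → X))
    (𝒯 : Filter ((S → X) × (S → X))) : Prop where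
  K_empty : ∅ ∈ 𝒦
  K_union : ∀ κ₁ ∈ 𝒦, ∀ κ₂ ∈ 𝒦, κ₁ ∪ κ₂ ∈ 𝒦
  G_empty : ∅ ∈ 𝒢
  G_union : ∀ γ₁ ∈ 𝒢, ∀ γ₂ ∈ 𝒢, γ₁ ∪ γ₂ ∈ 𝒢
  G_inter : ∀ γ₁ ∈ 𝒢, ∀ γ₂ ∈ 𝒢, γ₁ ∩ γ₂ ∈ 𝒢
  KG_diff : ∀ κ ∈ 𝒦, ∀ γ ∈ 𝒢, κ \ γ ∈ 𝒦 ∧ γ \ κ ∈ 𝒢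
  KG_interpose : ∀ κ ∈ 𝒦, ∀ γ ∈ 𝒢, κ ⊆ γ →
      ∃ γ' ∈ 𝒢, ∃ κ' ∈ 𝒦, κ ⊆ γ' ∧ γ' ⊆ κ' ∧ κ' ⊆ γ
  X_add : UniformContinuous fun p : X × X => p.1 + p.2
  B_nonempty : ℬ.Nonempty
  B_inter : ∀ 𝒞 ⊆ ℬ, 𝒞.Nonempty → ⋂₀ 𝒞 ∈ ℬ
  B_zero : ∀ B ∈ ℬ, (0 : X) ∈ B
  B_add : ∀ B ∈ ℬ, ∀ B' ∈ ℬ, ∃ C ∈ ℬ, B + B' ⊆ C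
  B_cover : ∀ x : X, ∃ B ∈ ℬ, x ∈ B
  F_zero : (0 : S → X) ∈ ℱ
  F_add : ∀ f ∈ ℱ, ∀ g ∈ ℱ, f + g ∈ ℱ
  T_refl : ∀ T ∈ 𝒯, ∀ f ∈ ℱ, (f, f) ∈ T
  T_symm : ∀ T ∈ 𝒯, ∃ V ∈ 𝒯, ∀ f g : S → X, (f, g) ∈ V → (g, f) ∈ T
  T_comp : ∀ T ∈ 𝒯, ∃ V ∈ 𝒯, ∀ f g h : S → X, (f, g) ∈ V → (g, h) ∈ V → (f, h) ∈ T
  T_add : ∀ T ∈ 𝒯, ∃ V ∈ 𝒯, ∀ f f' g g' : S → X,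
      (f, f') ∈ V → (g, g') ∈ V → (f + g, f' + g') ∈ T
  F_range : ∀ f ∈ ℱ, ∃ B ∈ ℬ, Set.range f ⊆ B
  F_partble : ∀ f ∈ ℱ, ∀ W ∈ uniformity X, ∃ G : Finset (Set S), ↑G ⊆ 𝒢 ∧
      (⋃ γ ∈ G, γ) = Set.univ ∧ ∀ γ ∈ G, ∀ s ∈ γ, ∀ t ∈ γ, (f s, f t) ∈ W
  F_urysohn : ∀ κ ∈ 𝒦, ∀ γ ∈ 𝒢, κ ⊆ γ → ∀ x : X, ∃ f ∈ ℱ,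
      Set.range f ⊆ BHull ℬ x ∧ SupportedBy 𝒦 f γ ∧ EqualsOver 𝒢 f x κ
  F_ext : ∀ B ∈ ℬ, ∀ T ∈ 𝒯, ∃ U ∈ uniformity X, ∀ κ ∈ 𝒦, ∀ γ ∈ 𝒢, κ ⊆ γ →
      ∀ f ∈ FB ℱ B, ∀ g ∈ FB ℱ B, SupportedBy 𝒦 f γ → SupportedBy 𝒦 g γ →
      (∃ ω ∈ 𝒢, κ ⊆ ω ∧ ω ⊆ γ ∧ ∀ s ∈ ω, (f s, g s) ∈ U) →
      ∃ p ∈ FB ℱ B, ∃ q ∈ FB ℱ B, SupportedBy 𝒦 p (γ \ κ) ∧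
        SupportedBy 𝒦 q (γ \ κ) ∧ (f + p, g + q) ∈ T
  F_partunity : ∀ B ∈ ℬ, ∀ G : Finset (Set S), ↑G ⊆ 𝒢 → ∀ κ ∈ 𝒦, κ ⊆ (⋃ γ ∈ G, γ) →
      ∀ f ∈ FB ℱ B, ∃ g : Set S → (S → X),
        (∀ γ ∈ G, g γ ∈ FB ℱ B ∧ SupportedBy 𝒦 (g γ) γ) ∧
        (∀ J : Finset (Set S), J ⊆ G → (∑ γ ∈ J, g γ) ∈ FB ℱ B) ∧
        ∀ s ∈ κ, f s = ∑ γ ∈ G, g γ s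

/-- `f` and `g` are `ℰ`-separated. -/
def ESeparated {S : Type u} {X : Type v} [Zero X]
    (𝒦 𝒢 : Set (Set S)) (f g : S → X) : Prop :=
  ∃ E₁ ∈ genField 𝒦 𝒢, ∃ E₂ ∈ genField 𝒦 𝒢, Disjoint E₁ E₂ ∧
    SupportedBy 𝒦 f E₁ ∧ SupportedBy 𝒦 g E₂

/-- `ℓ` is `ℰ`-additive. -/
def EAdditive {S : Type u} {X : Type v} {Z : Type w} [AddCommMonoid X] [AddCommMonoid Z]
    (𝒦 𝒢 : Set (Set S)) (ℱ : Set (S → X)) (ℓ : (S → X) → Z) : Prop :=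
  ∀ f ∈ ℱ, ∀ g ∈ ℱ, ESeparated 𝒦 𝒢 f g → ℓ (f + g) = ℓ f + ℓ g

/-- `ℓ` is `s`-bounded over `ℬ`. -/
def SBounded {S : Type u} {X : Type v} {Z : Type w} [AddCommMonoid X]
    [AddCommMonoid Z] [UniformSpace Z]
    (𝒦 𝒢 : Set (Set S)) (ℬ : Set (Set X)) (ℱ : Set (S → X)) (ℓ : (S → X) → Z) : Prop :=
  ∀ B ∈ ℬ, ∀ W : Set (Z × Z), IsUnifEnt Z W → ∀ G : ℕ → Set S, (∀ n, G n ∈ 𝒢) →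
    (∀ m n : ℕ, m ≠ n → Disjoint (G m) (G n)) → ∃ m : ℕ, ∀ n > m,
      ∀ f ∈ FB ℱ B, ∀ g ∈ FB ℱ B, SupportedBy 𝒦 g (G n) → (ℓ f, ℓ (f + g)) ∈ W

/-- `ℓ` is uniformly continuous on `A` with respect to the uniformity `𝒯`. -/
def UContOn {S : Type u} {X : Type v} {Z : Type w} [UniformSpace Z]
    (𝒯 : Filter ((S → X) × (S → X))) (A : Set (S → X)) (ℓ : (S → X) → Z) : Prop :=
  ∀ W ∈ uniformity Z, ∃ T ∈ 𝒯, ∀ f ∈ A, ∀ g ∈ A, (f, g) ∈ T → (ℓ f, ℓ g) ∈ W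

/-- A relatively complete subset of a uniform space. -/
def RelComplete {Z : Type w} [UniformSpace Z] (A : Set Z) : Prop :=
  IsComplete (closure A)

/-- `ℓ` is a Riesz integral over the Riesz system `(S,(𝒦,𝒢),(X,ℬ),(ℱ,𝒯))`. -/
def RieszIntegral {S : Type u} {X : Type v} {Z : Type w} [AddCommMonoid X]
    [AddCommMonoid Z] [UniformSpace Z]
    (𝒦 𝒢 : Set (Set S)) (ℬ : Set (Set X)) (ℱ : Set (S → X))
    (𝒯 : Filter ((S → X) × (S → X))) (ℓ : (S → X) → Z) : Prop :=
  EAdditive 𝒦 𝒢 ℱ ℓ ∧ SBounded 𝒦 𝒢 ℬ ℱ ℓ ∧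
    ∀ B ∈ ℬ, UContOn 𝒯 (FB ℱ B) ℓ ∧ RelComplete (ℓ '' FB ℱ B)

/-- The members of a finite family of sets are pairwise disjoint. -/
def PairwiseDisjFinset {S : Type u} (K : Finset (Set S)) : Prop :=
  ∀ κ₁ ∈ K, ∀ κ₂ ∈ K, κ₁ ≠ κ₂ → Disjoint κ₁ κ₂

/-- `α` is `W`-small with respect to `(h, B)`. -/
def WSmall {S : Type u} {X : Type v} {Z : Type w} [AddCommMonoid X] [AddCommMonoid Z]
    (𝒦 𝒢 : Set (Set S)) (h : Set S → X → Z) (B : Set X)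
    (W : Set (Z × Z)) (α : Set S) : Prop :=
  ∃ γ ∈ 𝒢, α ⊆ γ ∧ ∀ K : Finset (Set S), ↑K ⊆ 𝒦 → PairwiseDisjFinset K →
    (∀ κ ∈ K, κ ⊆ γ) → ∀ x y : Set S → X, (∀ κ ∈ K, x κ ∈ B) → (∀ κ ∈ K, y κ ∈ B) →
      (∑ κ ∈ K, h κ (x κ), ∑ κ ∈ K, h κ (x κ + y κ)) ∈ W

/-- `α` is regular with respect to `(h, 𝒦, 𝒢, ℬ)`. -/
def RegularSet {S : Type u} {X : Type v} {Z : Type w} [AddCommMonoid X]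
    [AddCommMonoid Z] [UniformSpace Z]
    (𝒦 𝒢 : Set (Set S)) (ℬ : Set (Set X)) (h : Set S → X → Z) (α : Set S) : Prop :=
  ∀ B ∈ ℬ, ∀ V : Set (Z × Z), IsUnifEnt Z V →
    ∃ κ ∈ 𝒦, ∃ γ ∈ 𝒢, κ ⊆ α ∧ α ⊆ γ ∧ WSmall 𝒦 𝒢 h B V (γ \ κ)

/-- `R_h`: the family of regular sets of `h`. -/
def RSet {S : Type u} {X : Type v} {Z : Type w} [AddCommMonoid X]
    [AddCommMonoid Z] [UniformSpace Z]
    (𝒦 𝒢 : Set (Set S)) (ℬ : Set (Set X)) (h : Set S → X → Z) : Set (Set S) :=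
  {α | RegularSet 𝒦 𝒢 ℬ h α}

/-- `h` is uniformly partition continuous with respect to `(𝒦,𝒢,ℬ)`. -/
def UPartCont {S : Type u} {X : Type v} {Z : Type w} [AddCommMonoid X] [UniformSpace X]
    [AddCommMonoid Z] [UniformSpace Z]
    (𝒦 𝒢 : Set (Set S)) (ℬ : Set (Set X)) (h : Set S → X → Z) : Prop :=
  ∀ W : Set (Z × Z), IsUnifEnt Z W → ∀ B ∈ ℬ, ∃ U ∈ uniformity X,
    ∀ R : Finset (Set S), ↑R ⊆ RSet 𝒦 𝒢 ℬ h → PairwiseDisjFinset R →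
    ∀ x y : Set S → X, (∀ ρ ∈ R, x ρ ∈ B ∧ y ρ ∈ B ∧ (x ρ, y ρ) ∈ U) →
      (∑ ρ ∈ R, h ρ (x ρ), ∑ ρ ∈ R, h ρ (y ρ)) ∈ W

/-- `h` is `s`-bounded with respect to `(𝒦,𝒢,ℬ)`. -/
def MSBounded {S : Type u} {X : Type v} {Z : Type w} [AddCommMonoid X]
    [AddCommMonoid Z] [UniformSpace Z]
    (𝒦 𝒢 : Set (Set S)) (ℬ : Set (Set X)) (h : Set S → X → Z) : Prop :=
  ∀ B ∈ ℬ, ∀ α : ℕ → Set S, (∀ n, α n ∈ RSet 𝒦 𝒢 ℬ h) →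
    (∀ m n : ℕ, m ≠ n → Disjoint (α m) (α n)) → ∀ V : Set (Z × Z), IsUnifEnt Z V →
      ∃ m : ℕ, ∀ n > m, WSmall 𝒦 𝒢 h B V (α n)

/-- `𝒱(h,𝒦,𝒢,B)`: all finite sums `∑_{ρ∈R} x_ρ.h(ρ)`. -/
def VSums {S : Type u} {X : Type v} {Z : Type w} [AddCommMonoid X]
    [AddCommMonoid Z] [UniformSpace Z]
    (𝒦 𝒢 : Set (Set S)) (ℬ : Set (Set X)) (h : Set S → X → Z) (B : Set X) : Set Z :=
  {z | ∃ R : Finset (Set S), ↑R ⊆ RSet 𝒦 𝒢 ℬ h ∧ PairwiseDisjFinset R ∧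
    ∃ x : Set S → X, (∀ ρ ∈ R, x ρ ∈ B) ∧ z = ∑ ρ ∈ R, h ρ (x ρ)}

/-- `z` is the limit of the net `(F κ x : κ ∈ 𝒦, κ ⊆ γ)` directed by inclusion. -/
def KBelowLim {S : Type u} {X : Type v} {Z : Type w} [TopologicalSpace Z]
    (𝒦 : Set (Set S)) (γ : Set S) (F : Set S → X → Z) (x : X) (z : Z) : Prop :=
  Tendsto (fun κ : {κ : Set S // κ ∈ 𝒦 ∧ κ ⊆ γ} => F κ.1 x) atTop (nhds z)

/-- `z` is the limit of the net `(F γ' x : γ' ∈ 𝒢, α ⊆ γ')` directed by reverse inclusion. -/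
def GAboveLim {S : Type u} {X : Type v} {Z : Type w} [TopologicalSpace Z]
    (𝒢 : Set (Set S)) (α : Set S) (F : Set S → X → Z) (x : X) (z : Z) : Prop :=
  Tendsto (fun γ : {γ : Set S // γ ∈ 𝒢 ∧ α ⊆ γ} => F γ.1 x) atBot (nhds z)

/-- `h` is a Riesz measure over `(𝒦,𝒢,ℬ)`. -/
def RieszMeasure {S : Type u} {X : Type v} {Z : Type w} [AddCommMonoid X] [UniformSpace X]
    [AddCommMonoid Z] [UniformSpace Z]
    (𝒦 𝒢 : Set (Set S)) (ℬ : Set (Set X)) (h : Set S → X → Z) : Prop :=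
  𝒢 ⊆ RSet 𝒦 𝒢 ℬ h ∧
  IsSetField (RSet 𝒦 𝒢 ℬ h) ∧
  (∀ ρ₁ ∈ RSet 𝒦 𝒢 ℬ h, ∀ ρ₂ ∈ RSet 𝒦 𝒢 ℬ h, Disjoint ρ₁ ρ₂ →
      ∀ x : X, h (ρ₁ ∪ ρ₂) x = h ρ₁ x + h ρ₂ x) ∧
  (∀ γ ∈ 𝒢, ∀ x : X, KBelowLim 𝒦 γ h x (h γ x)) ∧
  (∀ α : Set S, ∀ x : X, GAboveLim 𝒢 α h x (h α x)) ∧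
  UPartCont 𝒦 𝒢 ℬ h ∧ MSBounded 𝒦 𝒢 ℬ h ∧
  ∀ B ∈ ℬ, RelComplete (VSums 𝒦 𝒢 ℬ h B)

/-- The finite disjoint family `R` refines `Q`. -/
def RefinesF {S : Type u} (R Q : Finset (Set S)) : Prop :=
  ∀ ρ ∈ R, ∃ q ∈ Q, ρ ⊆ q

/-- `R` is a finite disjoint partition of `E` by sets regular for `h`. -/
def IsPartitionOf {S : Type u} {X : Type v} {Z : Type w} [AddCommMonoid X]
    [AddCommMonoid Z] [UniformSpace Z]
    (𝒦 𝒢 : Set (Set S)) (ℬ : Set (Set X)) (h : Set S → X → Z)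
    (R : Finset (Set S)) (E : Set S) : Prop :=
  ↑R ⊆ RSet 𝒦 𝒢 ℬ h ∧ PairwiseDisjFinset R ∧ (⋃ ρ ∈ R, ρ) = E

/-- `z = ∫_E f.dμ`. -/
def IsIntegralOf {S : Type u} {X : Type v} {Z : Type w} [AddCommMonoid X]
    [AddCommMonoid Z] [UniformSpace Z]
    (𝒦 𝒢 : Set (Set S)) (ℬ : Set (Set X)) (μ : Set S → X → Z)
    (E : Set S) (f : S → X) (z : Z) : Prop :=
  ∀ V ∈ nhds z, ∃ Q : Finset (Set S), IsPartitionOf 𝒦 𝒢 ℬ μ Q E ∧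
    ∀ R : Finset (Set S), IsPartitionOf 𝒦 𝒢 ℬ μ R E → RefinesF R Q →
      ∀ s : Set S → S, (∀ ρ ∈ R, s ρ ∈ ρ) → (∑ ρ ∈ R, μ ρ (f (s ρ))) ∈ V

/-- `ℱ*(x,κ,γ,B)`. -/
def FStar {S : Type u} {X : Type v} [Zero X]
    (𝒦 𝒢 : Set (Set S)) (ℱ : Set (S → X)) (x : X) (κ γ : Set S) (B : Set X) :
    Set (S → X) :=
  {f | f ∈ FB ℱ B ∧ EqualsOver 𝒢 f x κ ∧ SupportedBy 𝒦 f γ}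

/-- `τ` is the set function `τ_ℓ` generated by `ℓ` on `𝒦`. -/
def IsTau {S : Type u} {X : Type v} {Z : Type w} [AddCommMonoid X] [UniformSpace Z]
    (𝒦 𝒢 : Set (Set S)) (ℬ : Set (Set X)) (ℱ : Set (S → X))
    (ℓ : (S → X) → Z) (τ : Set S → X → Z) : Prop :=
  ∀ κ ∈ 𝒦, ∀ x : X, ∀ V ∈ nhds (τ κ x), ∃ β ∈ 𝒢, κ ⊆ β ∧
    ℓ '' FStar 𝒦 𝒢 ℱ x κ β (BHull ℬ x) ⊆ V

/-- `ξ = ξ_ℓ` is the pointwise limit of `τ = τ_ℓ` over `𝒦⁻(γ)`. -/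
def IsXi {S : Type u} {X : Type v} {Z : Type w} [TopologicalSpace Z]
    (𝒦 𝒢 : Set (Set S)) (τ ξ : Set S → X → Z) : Prop :=
  ∀ γ ∈ 𝒢, ∀ x : X, KBelowLim 𝒦 γ τ x (ξ γ x)

/-- `ν = ν_ℓ` is the pointwise limit of `ξ = ξ_ℓ` over `𝒢⁺(α)`. -/
def IsNu {S : Type u} {X : Type v} {Z : Type w} [TopologicalSpace Z]
    (𝒢 : Set (Set S)) (ξ ν : Set S → X → Z) : Prop :=
  ∀ α : Set S, ∀ x : X, GAboveLim 𝒢 α ξ x (ν α x)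

/-- `S(W,B,ℓ)`. -/
def SWB {S : Type u} {X : Type v} {Z : Type w} [AddCommMonoid X]
    (𝒦 𝒢 : Set (Set S)) (ℱ : Set (S → X)) (ℓ : (S → X) → Z)
    (W : Set (Z × Z)) (B : Set X) : Set (Set S) :=
  {γ | γ ∈ 𝒢 ∧ ∀ f ∈ FB ℱ B, ∀ g ∈ FB ℱ B, SupportedBy 𝒦 g γ → (ℓ f, ℓ (f + g)) ∈ W}

/-- `ℓ` has the Hammerstein property relative to `ℰ`. -/
def Hammerstein {S : Type u} {X : Type v} {Z : Type w} [AddCommMonoid X] [AddCommMonoid Z]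
    (𝒦 𝒢 : Set (Set S)) (ℱ : Set (S → X)) (ℓ : (S → X) → Z) : Prop :=
  ∀ f ∈ ℱ, ∀ g₁ ∈ ℱ, ∀ g₂ ∈ ℱ, ESeparated 𝒦 𝒢 g₁ g₂ →
    ℓ (f + g₁ + g₂) + ℓ f = ℓ (f + g₁) + ℓ (f + g₂)

/-- `ℓ` is quasi-additive. -/
def QuasiAdditive {S : Type u} {X : Type v} {Z : Type w} [AddCommMonoid X]
    [AddCommMonoid Z] [UniformSpace Z]
    (ℬ : Set (Set X)) (ℱ : Set (S → X)) (ℓ : (S → X) → Z) : Prop :=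
  ∀ W : Set (Z × Z), IsUnifEnt Z W → ∀ B ∈ ℬ, ∃ V : Set (Z × Z), IsUnifEnt Z V ∧
    ∀ f ∈ FB ℱ B, ∀ g ∈ FB ℱ B, ((0 : Z), ℓ g) ∈ V → (ℓ f, ℓ (f + g)) ∈ W

/-- A perfect subset of `Z`: any function whose finite partial sums all lie in the set
is summable. -/
def PerfectSet {Z : Type w} [AddCommMonoid Z] [TopologicalSpace Z] (A : Set Z) : Prop :=
  ∀ ⦃ι : Type w⦄ (g : ι → Z), (∀ J : Finset ι, ∑ i ∈ J, g i ∈ A) → Summable g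

/-- A quasi-perfect subset of `Z`: any function whose finite partial sums all lie in the
set has a Cauchy net of finite partial sums. -/
def QuasiPerfectSet {Z : Type w} [AddCommMonoid Z] [UniformSpace Z] (A : Set Z) : Prop :=
  ∀ ⦃ι : Type w⦄ (g : ι → Z), (∀ J : Finset ι, ∑ i ∈ J, g i ∈ A) →
    Cauchy (Filter.map (fun J : Finset ι => ∑ i ∈ J, g i) Filter.atTop)

/-- `α` is `U`-small with respect to `(ℓ, B)`. -/
def USmallOp {S : Type u}{X : Type v} {Z : Type w} [AddCommMonoid X] [Zero X]
    (𝒦 : Set (Set S)) (ℱ : Set (S → X)) (ℓ : (S → X) → Z) (B : Set X)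
    (U : Set (Z × Z)) (α : Set S) : Prop :=
  ∀ f ∈ FB ℱ B, ∀ g ∈ FB ℱ B, SupportedBy 𝒦 g α → (ℓ f, ℓ (f + g)) ∈ U

/-- `ℓ` is `𝒢`-bounded. -/
def GBounded {S : Type u} {X : Type v} {Z : Type w} [AddCommMonoid X]
    [AddCommMonoid Z] [UniformSpace Z]
    (𝒦 𝒢 : Set (Set S)) (ℬ : Set (Set X)) (ℱ : Set (S → X)) (ℓ : (S → X) → Z) : Prop :=
  ∀ U : Set (Z × Z), IsUnifEnt Z U → ∀ B ∈ ℬ, ∀ K ∈ 𝒦, ∀ 𝒢' ⊆ 𝒢, K ⊆ ⋃₀ 𝒢' →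
    ∃ H : Finset (Set S), ↑H ⊆ 𝒢' ∧ USmallOp 𝒦 ℱ ℓ B U (K \ ⋃ γ ∈ H, γ)

/-- `ℬ₀` (Notation 2.2). -/
def B0 {X : Type v} [AddCommMonoid X] (ℬ : Set (Set X)) : Set (Set X) :=
  ⋂₀ {ℋ | ℋ ⊆ ℬ ∧ (∀ 𝒞 ⊆ ℋ, 𝒞.Nonempty → ⋂₀ 𝒞 ∈ ℋ) ∧ ⋂₀ ℋ = {0} ∧
      (∀ x : X, BHull ℬ x ∈ ℋ) ∧ ∀ H₁ ∈ ℋ, ∀ H₂ ∈ ℋ, BHullS ℬ (H₁ + H₂) ∈ ℋ}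

/-- `ℱ₀` (Notation 2.2). -/
def F0 {S : Type u} {X : Type v} [AddCommMonoid X]
    (ℬ : Set (Set X)) (ℱ : Set (S → X)) : Set (S → X) :=
  {f | f ∈ ℱ ∧ ∃ B ∈ B0 ℬ, Set.range f ⊆ B}

/-- The uniformity of uniform convergence on `S`, as a filter on `(S → X) × (S → X)`. -/
def UnifConvFilter (S : Type u) (X : Type v) [UniformSpace X] :
    Filter ((S → X) × (S → X)) :=
  ⨅ V ∈ uniformity X, Filter.principal {p : (S → X) × (S → X) | ∀ s : S, (p.1 s, p.2 s) ∈ V}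

/-- The additional conditions of Remark 2.5.1 on a Riesz system. -/
structure Remark251 {S : Type u} {X : Type v} [TopologicalSpace S]
    [AddCommGroup X] [Module ℝ X] [UniformSpace X]
    (𝒦 𝒢 : Set (Set S)) (ℬ : Set (Set X)) (ℱ : Set (S → X))
    (𝒯 : Filter ((S → X) × (S → X))) : Prop where
  K_closed : ∀ κ ∈ 𝒦, IsClosed κ
  G_open : ∀ γ ∈ 𝒢, IsOpen γ
  B_def : ℬ = {B : Set X | IsClosed B ∧ TotallyBounded B}
  F_sub : ∀ f ∈ ℱ, Continuous f ∧ TotallyBounded (Set.range f)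
  F_module : ∀ φ : S → ℝ, Continuous φ → TotallyBounded (Set.range φ) →
      ∀ f ∈ ℱ, (fun s => φ s • f s) ∈ ℱ
  F_tensor : ∀ x : X, ∀ φ : S → ℝ, Continuous φ → TotallyBounded (Set.range φ) →
      (∃ κ ∈ 𝒦, ∀ s ∉ κ, φ s = 0) → (fun s => φ s • x) ∈ ℱ
  T_coarser : UnifConvFilter S X ≤ 𝒯

/-- `A` is a bounded subset of the "topological vector space" `(ℱ,𝒯)`:
it is absorbed by every `𝒯`-neighbourhood of `0`. -/
def FBddIn {S : Type u} {X : Type v} [AddCommGroup X] [Module ℝ X]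
    (𝒯 : Filter ((S → X) × (S → X))) (A : Set (S → X)) : Prop :=
  ∀ T ∈ 𝒯, ∃ r : ℝ, 0 < r ∧ ∀ f ∈ A, ∀ c : ℝ, |c| ≤ r → ((0 : S → X), c • f) ∈ T

/-! Two `ℰ`-separated functions vanish off disjoint members of `𝒦`, so at every point of `S`
at most one `g j` is nonzero. Hence `∑_{j∈J} g_j` takes its values among those of the `g_j`
and `0`, i.e. in `B`, and `ℓ` is additive along the partial sums, which gives
`∑_{j∈J} ℓ(g_j) = ℓ(∑_{j∈J} g_j)`. -/

lemma Finset.sum_mem_of_pairwise_eq_zero_or {ι M : Type*} [AddCommMonoid M] {x : ι → M}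
    {J : Finset ι} {B : Set M} (hx : ∀ i ∈ J, ∀ j ∈ J, i ≠ j → x i = 0 ∨ x j = 0)
    (hB : ∀ i ∈ J, x i ∈ B) (h0 : (0 : M) ∈ B) : ∑ i ∈ J, x i ∈ B := by
  by_cases hzero : ∀ i ∈ J, x i = 0
  · rwa [Finset.sum_eq_zero hzero]
  obtain ⟨i, hi, hxi⟩ := not_forall₂.1 hzero
  rw [Finset.sum_eq_single_of_mem i hi
    fun j hj hji => (hx i hi j hj hji.symm).resolve_left hxi]
  exact hB i hi

section

variable {S : Type u} {X : Type v} [AddCommMonoid X] {𝒦 𝒢 : Set (Set S)}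

lemma K_subset_genField : 𝒦 ⊆ genField 𝒦 𝒢 :=
  fun _ hκ => Set.mem_sInter.2 fun _ hℰ => hℰ.1 (Or.inl hκ)

lemma eSeparated_iff {f g : S → X} :
    ESeparated 𝒦 𝒢 f g ↔ ∃ κ₁ ∈ 𝒦, ∃ κ₂ ∈ 𝒦, Disjoint κ₁ κ₂ ∧
      (∀ s ∉ κ₁, f s = 0) ∧ ∀ s ∉ κ₂, g s = 0 := by
  constructor
  · rintro ⟨_, _, _, _, hE, ⟨κ₁, hκ₁, hκ₁E, hf⟩, ⟨κ₂, hκ₂, hκ₂E, hg⟩⟩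
    exact ⟨κ₁, hκ₁, κ₂, hκ₂, hE.mono hκ₁E hκ₂E, hf, hg⟩
  · rintro ⟨κ₁, hκ₁, κ₂, hκ₂, hκ, hf, hg⟩
    exact ⟨κ₁, K_subset_genField hκ₁, κ₂, K_subset_genField hκ₂, hκ,
      ⟨κ₁, hκ₁, subset_rfl, hf⟩, ⟨κ₂, hκ₂, subset_rfl, hg⟩⟩

lemma ESeparated.eq_zero_or {f g : S → X} (h : ESeparated 𝒦 𝒢 f g) (s : S) :
    f s = 0 ∨ g s = 0 := by
  obtain ⟨κ₁, -, κ₂, -, hκ, hf, hg⟩ := eSeparated_iff.1 h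
  by_cases hs : s ∈ κ₁
  · exact Or.inr (hg s (hκ.notMem_of_mem_left hs))
  · exact Or.inl (hf s hs)

variable [UniformSpace X] {ℬ : Set (Set X)} {ℱ : Set (S → X)}
  {𝒯 : Filter ((S → X) × (S → X))}

namespace RieszSystem

variable (hRS : RieszSystem 𝒦 𝒢 ℬ ℱ 𝒯)
include hRS

lemma biUnion_mem_G {G : Finset (Set S)} (hG : ↑G ⊆ 𝒢) : (⋃ γ ∈ G, γ) ∈ 𝒢 := by
  classical
  induction G using Finset.induction_on with
  | empty => simpa using hRS.G_empty
  | insert γ G _ ih =>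
    rw [Finset.set_biUnion_insert]
    exact hRS.G_union γ (hG (by simp)) _ (ih fun _ h => hG (by simp [h]))

/-- `S` is covered by finitely many members of `𝒢`, as the zero function is partitionable. -/
lemma univ_mem_G : (Set.univ : Set S) ∈ 𝒢 := by
  obtain ⟨G, hG, hcover, -⟩ := hRS.F_partble 0 hRS.F_zero Set.univ Filter.univ_mem
  simpa only [hcover] using hRS.biUnion_mem_G hG

lemma inter_mem_K {κ₁ κ₂ : Set S} (h₁ : κ₁ ∈ 𝒦) (h₂ : κ₂ ∈ 𝒦) : κ₁ ∩ κ₂ ∈ 𝒦 := by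
  have hcompl : Set.univ \ κ₂ ∈ 𝒢 := (hRS.KG_diff κ₂ h₂ _ hRS.univ_mem_G).2
  simpa only [← Set.compl_eq_univ_sdiff, Set.sdiff_compl] using (hRS.KG_diff κ₁ h₁ _ hcompl).1

lemma sum_mem {ι : Type*} {g : ι → S → X} {J : Finset ι} (hg : ∀ j ∈ J, g j ∈ ℱ) :
    ∑ j ∈ J, g j ∈ ℱ := by
  classical
  induction J using Finset.induction_on with
  | empty => simpa using hRS.F_zero
  | insert i J hi ih =>
    rw [Finset.sum_insert hi]
    exact hRS.F_add _ (hg i (by simp)) _ (ih fun j hj => hg j (by simp [hj]))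

end RieszSystem

lemma ESeparated.add_right (hRS : RieszSystem 𝒦 𝒢 ℬ ℱ 𝒯) {f g h : S → X}
    (hfg : ESeparated 𝒦 𝒢 f g) (hfh : ESeparated 𝒦 𝒢 f h) : ESeparated 𝒦 𝒢 f (g + h) := by
  obtain ⟨κ₁, hκ₁, κ₂, hκ₂, hκ, hf, hg⟩ := eSeparated_iff.1 hfg
  obtain ⟨μ₁, hμ₁, μ₂, hμ₂, hμ, hf', hh⟩ := eSeparated_iff.1 hfh
  refine eSeparated_iff.2 ⟨κ₁ ∩ μ₁, hRS.inter_mem_K hκ₁ hμ₁, κ₂ ∪ μ₂,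
    hRS.K_union κ₂ hκ₂ μ₂ hμ₂, ?_, fun s hs => ?_, fun s hs => ?_⟩
  · exact Set.disjoint_union_right.2
      ⟨hκ.mono_left Set.inter_subset_left, hμ.mono_left Set.inter_subset_right⟩
  · rcases not_and_or.1 hs with hs | hs
    exacts [hf s hs, hf' s hs]
  · rw [Set.mem_union, not_or] at hs
    simp only [Pi.add_apply, hg s hs.1, hh s hs.2, add_zero]

lemma ESeparated.sum_right (hRS : RieszSystem 𝒦 𝒢 ℬ ℱ 𝒯) {ι : Type*} {f : S → X}
    {g : ι → S → X} {J : Finset ι} (hJ : J.Nonempty) (h : ∀ j ∈ J, ESeparated 𝒦 𝒢 f (g j)) :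
    ESeparated 𝒦 𝒢 f (∑ j ∈ J, g j) := by
  induction hJ using Finset.Nonempty.cons_induction with
  | singleton j => simpa using h j (by simp)
  | cons i J hi _ ih =>
    rw [Finset.sum_cons]
    exact .add_right hRS (h i (by simp)) (ih fun j hj => h j (by simp [hj]))

lemma EAdditive.map_sum {Z : Type w} [AddCommMonoid Z] (hRS : RieszSystem 𝒦 𝒢 ℬ ℱ 𝒯)
    {ℓ : (S → X) → Z} (hℓ0 : ℓ 0 = 0) (hadd : EAdditive 𝒦 𝒢 ℱ ℓ) {ι : Type*}
    {g : ι → S → X} {J : Finset ι} (hg : ∀ j ∈ J, g j ∈ ℱ)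
    (hsep : ∀ i ∈ J, ∀ j ∈ J, i ≠ j → ESeparated 𝒦 𝒢 (g i) (g j)) :
    ℓ (∑ j ∈ J, g j) = ∑ j ∈ J, ℓ (g j) := by
  classical
  induction J using Finset.induction_on with
  | empty => simpa using hℓ0
  | insert i J hi ih =>
    have hgJ : ∀ j ∈ J, g j ∈ ℱ := fun j hj => hg j (by simp [hj])
    rw [Finset.sum_insert hi, Finset.sum_insert hi,
      ← ih hgJ fun k hk j hj => hsep k (by simp [hk]) j (by simp [hj])]
    rcases J.eq_empty_or_nonempty with rfl | hJ
    · simp [hℓ0]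
    refine hadd _ (hg i (by simp)) _ (hRS.sum_mem hgJ) (.sum_right hRS hJ fun j hj => ?_)
    exact hsep i (by simp) j (by simp [hj]) (by rintro rfl; exact hi hj)

end

theorem stmt7_general {S : Type u} {X : Type v} {Z : Type w}
    [AddCommMonoid X] [UniformSpace X]
    [AddCommMonoid Z]
    {𝒦 𝒢 : Set (Set S)} {ℬ : Set (Set X)} {ℱ : Set (S → X)}
    {𝒯 : Filter ((S → X) × (S → X))}
    (hRS : RieszSystem 𝒦 𝒢 ℬ ℱ 𝒯)
    (ℓ : (S → X) → Z) (hℓ0 : ℓ 0 = 0) (hadd : EAdditive 𝒦 𝒢 ℱ ℓ) :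
    ∀ B ∈ ℬ, ∀ g : ℕ → (S → X), (∀ n, g n ∈ FB ℱ B) →
      (∀ m n : ℕ, m ≠ n → ESeparated 𝒦 𝒢 (g m) (g n)) →
      ∀ J : Finset ℕ, (∑ j ∈ J, ℓ (g j)) ∈ ℓ '' FB ℱ B := by
  intro B hB g hg hsep J
  have hsepJ : ∀ i ∈ J, ∀ j ∈ J, i ≠ j → ESeparated 𝒦 𝒢 (g i) (g j) :=
    fun i _ j _ => hsep i j
  have hrange : Set.range (∑ j ∈ J, g j) ⊆ B := by
    rintro _ ⟨s, rfl⟩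
    rw [Finset.sum_apply]
    exact Finset.sum_mem_of_pairwise_eq_zero_or
      (fun i _ j _ hij => (hsep i j hij).eq_zero_or s)
      (fun j _ => (hg j).2 (Set.mem_range_self s)) (hRS.B_zero B hB)
  exact ⟨∑ j ∈ J, g j, ⟨hRS.sum_mem fun j _ => (hg j).1, hrange⟩,
    hadd.map_sum hRS hℓ0 (fun j _ => (hg j).1) hsepJ⟩

theorem stmt7 {S : Type u} {X : Type v} {Z : Type w}
    [AddCommMonoid X] [UniformSpace X] [T2Space X]
    [AddCommMonoid Z] [UniformSpace Z] [T2Space Z]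
    (hZadd : UniformContinuous fun p : Z × Z => p.1 + p.2)
    {𝒦 𝒢 : Set (Set S)} {ℬ : Set (Set X)} {ℱ : Set (S → X)}
    {𝒯 : Filter ((S → X) × (S → X))}
    (hRS : RieszSystem 𝒦 𝒢 ℬ ℱ 𝒯)
    (ℓ : (S → X) → Z) (hℓ0 : ℓ 0 = 0) (hadd : EAdditive 𝒦 𝒢 ℱ ℓ) :
    ∀ B ∈ ℬ, ∀ g : ℕ → (S → X), (∀ n, g n ∈ FB ℱ B) →
      (∀ m n : ℕ, m ≠ n → ESeparated 𝒦 𝒢 (g m) (g n)) →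
      ∀ J : Finset ℕ, (∑ j ∈ J, ℓ (g j)) ∈ ℓ '' FB ℱ B :=
  stmt7_general hRS ℓ hℓ0 hadd
end

section
/- Let ℜ = (S,(𝒦,𝒢),(X,ℬ),(ℱ,𝒯)) be a Riesz system, Z a uniform commutative monoid, and ℓ : ℱ → Z a Riesz integral over ℜ. Then for every B∈ℬ and W∈unif Z: (i) for every γ∈𝒢 there exists κ'∈𝒦 with κ'⊆γ and γ∖κ' ∈ S(W,B,ℓ); and (ii) for every κ∈𝒦 there exists γ'∈𝒢 with κ⊆γ' and γ'∖κ ∈ S(W,B,ℓ). -/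
open Filter Set Topology
open scoped Pointwise

universe u v w

/-! Both parts are exhaustion arguments against s-boundedness. If (i) failed for `γ`, every
remainder `γ \ κ` would lie outside `S(W,B,ℓ)`, so it would contain a set `G ∈ 𝒢` outside
`S(W,B,ℓ)` squeezed below some `κ' ∈ 𝒦` with `κ' ⊆ γ \ κ`. Replacing `κ` by `κ ∪ κ'` and
repeating carves out a disjoint sequence of such `G`, which s-boundedness forbids. Part (ii) is
the same argument run on the shrinking remainders `γ \ κ`, starting from `γ = S` and removing
`κ'` from `γ` at each step. -/

open Function

def MeetsDisjointSeqs {S : Type u} (𝒢 𝒮 : Set (Set S)) : Prop :=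
  ∀ G : ℕ → Set S, (∀ n, G n ∈ 𝒢) → Pairwise (Disjoint on G) → ∃ n, G n ∈ 𝒮

section Exhaustion

variable {S : Type u}

theorem exists_pairwise_disjoint_seq_of_carve {P Q : Set S → Prop} {D₀ : Set S} (h₀ : Q D₀)
    (hcarve : ∀ D, Q D → ∃ G, P G ∧ G ⊆ D ∧ ∃ D', Q D' ∧ D' ⊆ D \ G) :
    ∃ G : ℕ → Set S, (∀ n, P (G n)) ∧ Pairwise (Disjoint on G) := by
  choose! G hP hGD next hQnext hnext using hcarve
  let D : ℕ → Set S := fun n => next^[n] D₀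
  have hD_succ (n : ℕ) : D (n + 1) = next (D n) := iterate_succ_apply' _ _ _
  have hQ (n : ℕ) : Q (D n) := by
    induction n with
    | zero => exact h₀
    | succ n ih => rw [hD_succ]; exact hQnext _ ih
  have hanti : Antitone D := antitone_nat_of_succ_le fun n => by
    rw [hD_succ]; exact (hnext _ (hQ n)).trans sdiff_subset
  refine ⟨fun n => G (D n), fun n => hP _ (hQ n), (pairwise_disjoint_on _).2 fun m n hmn => ?_⟩
  have hGn : G (D n) ⊆ D m \ G (D m) :=
    (hGD _ (hQ n)).trans ((hanti hmn).trans (by rw [hD_succ]; exact hnext _ (hQ m)))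
  exact Set.disjoint_left.2 fun s hsm hsn => (hGn hsn).2 hsm

variable {𝒦 𝒢 𝒮 : Set (Set S)}

theorem exists_K_subset_diff_mem (hK_empty : ∅ ∈ 𝒦)
    (hK_union : ∀ κ₁ ∈ 𝒦, ∀ κ₂ ∈ 𝒦, κ₁ ∪ κ₂ ∈ 𝒦)
    (hdiff : ∀ κ ∈ 𝒦, ∀ γ ∈ 𝒢, γ \ κ ∈ 𝒢)
    (hinner : ∀ δ ∈ 𝒢, δ ∉ 𝒮 → ∃ γ' ∈ 𝒢, γ' ∉ 𝒮 ∧ ∃ κ' ∈ 𝒦, γ' ⊆ κ' ∧ κ' ⊆ δ)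
    (hmeets : MeetsDisjointSeqs 𝒢 𝒮) {γ : Set S} (hγ : γ ∈ 𝒢) :
    ∃ κ ∈ 𝒦, κ ⊆ γ ∧ γ \ κ ∈ 𝒮 := by
  by_contra! hbad
  obtain ⟨G, hG, hdisj⟩ := exists_pairwise_disjoint_seq_of_carve
    (P := fun G => G ∈ 𝒢 ∧ G ∉ 𝒮) (Q := fun D => ∃ κ ∈ 𝒦, κ ⊆ γ ∧ D = γ \ κ)
    ⟨∅, hK_empty, empty_subset γ, sdiff_empty.symm⟩ <| by
      rintro _ ⟨κ, hκ, hκγ, rfl⟩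
      obtain ⟨G, hG, hGbad, τ, hτ, hGτ, hτD⟩ := hinner _ (hdiff κ hκ γ hγ) (hbad κ hκ hκγ)
      refine ⟨G, ⟨hG, hGbad⟩, hGτ.trans hτD, γ \ (κ ∪ τ), ⟨κ ∪ τ, hK_union κ hκ τ hτ,
        union_subset hκγ (hτD.trans sdiff_subset), rfl⟩, ?_⟩
      rw [← sdiff_sdiff]
      exact sdiff_subset_sdiff_right hGτ
  obtain ⟨n, hn⟩ := hmeets G (fun n => (hG n).1) hdisj
  exact (hG n).2 hn

theorem exists_G_superset_diff_mem (huniv : univ ∈ 𝒢)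
    (hdiff : ∀ κ ∈ 𝒦, ∀ γ ∈ 𝒢, γ \ κ ∈ 𝒢)
    (hinner : ∀ δ ∈ 𝒢, δ ∉ 𝒮 → ∃ γ' ∈ 𝒢, γ' ∉ 𝒮 ∧ ∃ κ' ∈ 𝒦, γ' ⊆ κ' ∧ κ' ⊆ δ)
    (hmeets : MeetsDisjointSeqs 𝒢 𝒮) {κ : Set S} (hκ : κ ∈ 𝒦) :
    ∃ γ ∈ 𝒢, κ ⊆ γ ∧ γ \ κ ∈ 𝒮 := by
  by_contra! hbad
  obtain ⟨G, hG, hdisj⟩ := exists_pairwise_disjoint_seq_of_carve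
    (P := fun G => G ∈ 𝒢 ∧ G ∉ 𝒮) (Q := fun D => ∃ γ ∈ 𝒢, κ ⊆ γ ∧ D = γ \ κ)
    ⟨univ, huniv, subset_univ κ, rfl⟩ <| by
      rintro _ ⟨γ, hγ, hκγ, rfl⟩
      obtain ⟨G, hG, hGbad, τ, hτ, hGτ, hτD⟩ := hinner _ (hdiff κ hκ γ hγ) (hbad γ hγ hκγ)
      refine ⟨G, ⟨hG, hGbad⟩, hGτ.trans hτD, (γ \ τ) \ κ, ⟨γ \ τ, hdiff τ hτ γ hγ,
        fun s hs => ⟨hκγ hs, fun hsτ => (hτD hsτ).2 hs⟩, rfl⟩, ?_⟩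
      rw [sdiff_sdiff_comm]
      exact sdiff_subset_sdiff_right hGτ
  obtain ⟨n, hn⟩ := hmeets G (fun n => (hG n).1) hdisj
  exact (hG n).2 hn

end Exhaustion

section SmallSets

variable {S : Type u} {X : Type v} {Z : Type w} [AddCommMonoid X] {𝒦 𝒢 : Set (Set S)}
  {ℱ : Set (S → X)} {ℓ : (S → X) → Z} {W : Set (Z × Z)} {B : Set X}

theorem RieszSystem.univ_mem [UniformSpace X] {ℬ : Set (Set X)}
    {𝒯 : Filter ((S → X) × (S → X))} (hRS : RieszSystem 𝒦 𝒢 ℬ ℱ 𝒯) : univ ∈ 𝒢 := by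
  obtain ⟨G, hG𝒢, hGcov, -⟩ := hRS.F_partble 0 hRS.F_zero univ Filter.univ_mem
  rw [← hGcov, ← Finset.sup_set_eq_biUnion]
  exact Finset.sup_mem 𝒢 hRS.G_empty hRS.G_union G id fun γ hγ => hG𝒢 hγ

/-- Interpose a member of `𝒢` between the support of a witness of `δ ∉ S(W,B,ℓ)` and `δ`. -/
theorem exists_not_mem_SWB_subset_K
    (hinterpose : ∀ κ ∈ 𝒦, ∀ γ ∈ 𝒢, κ ⊆ γ →
      ∃ γ' ∈ 𝒢, ∃ κ' ∈ 𝒦, κ ⊆ γ' ∧ γ' ⊆ κ' ∧ κ' ⊆ γ) :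
    ∀ δ ∈ 𝒢, δ ∉ SWB 𝒦 𝒢 ℱ ℓ W B →
      ∃ γ' ∈ 𝒢, γ' ∉ SWB 𝒦 𝒢 ℱ ℓ W B ∧ ∃ κ' ∈ 𝒦, γ' ⊆ κ' ∧ κ' ⊆ δ := by
  intro δ hδ hbad
  simp only [SWB, mem_ofPred_eq, hδ, true_and, not_forall] at hbad
  obtain ⟨f, hf, g, hg, ⟨σ, hσ, hσδ, hgσ⟩, hfg⟩ := hbad
  obtain ⟨γ', hγ', κ', hκ', hσγ', hγ'κ', hκ'δ⟩ := hinterpose σ hσ δ hδ hσδ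
  exact ⟨γ', hγ', fun hgood => hfg (hgood.2 f hf g hg ⟨σ, hσ, hσγ', hgσ⟩), κ', hκ', hγ'κ', hκ'δ⟩

theorem SBounded.meetsDisjointSeqs_SWB [AddCommMonoid Z] [UniformSpace Z] {ℬ : Set (Set X)}
    (hℓ : SBounded 𝒦 𝒢 ℬ ℱ ℓ) (hB : B ∈ ℬ) (hW : IsUnifEnt Z W) :
    MeetsDisjointSeqs 𝒢 (SWB 𝒦 𝒢 ℱ ℓ W B) := fun G hG hdisj => by
  obtain ⟨m, hm⟩ := hℓ B hB W hW G hG hdisj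
  exact ⟨m + 1, hG (m + 1), hm (m + 1) m.lt_succ_self⟩

end SmallSets

theorem stmt13_general {S : Type u} {X : Type v} {Z : Type w}
    [AddCommMonoid X] [UniformSpace X]
    [AddCommMonoid Z] [UniformSpace Z]
    {𝒦 𝒢 : Set (Set S)} {ℬ : Set (Set X)} {ℱ : Set (S → X)}
    {𝒯 : Filter ((S → X) × (S → X))}
    (hRS : RieszSystem 𝒦 𝒢 ℬ ℱ 𝒯)
    (ℓ : (S → X) → Z) (hℓ : RieszIntegral 𝒦 𝒢 ℬ ℱ 𝒯 ℓ) :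
    ∀ B ∈ ℬ, ∀ W : Set (Z × Z), IsUnifEnt Z W →
      (∀ γ ∈ 𝒢, ∃ κ' ∈ 𝒦, κ' ⊆ γ ∧ (γ \ κ') ∈ SWB 𝒦 𝒢 ℱ ℓ W B) ∧
      ∀ κ ∈ 𝒦, ∃ γ' ∈ 𝒢, κ ⊆ γ' ∧ (γ' \ κ) ∈ SWB 𝒦 𝒢 ℱ ℓ W B := by
  intro B hB W hW
  have hdiff : ∀ κ ∈ 𝒦, ∀ γ ∈ 𝒢, γ \ κ ∈ 𝒢 := fun κ hκ γ hγ => (hRS.KG_diff κ hκ γ hγ).2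
  have hinner := exists_not_mem_SWB_subset_K (ℱ := ℱ) (ℓ := ℓ) (W := W) (B := B)
    hRS.KG_interpose
  have hmeets := hℓ.2.1.meetsDisjointSeqs_SWB hB hW
  exact ⟨fun γ hγ => exists_K_subset_diff_mem hRS.K_empty hRS.K_union hdiff hinner hmeets hγ,
    fun κ hκ => exists_G_superset_diff_mem hRS.univ_mem hdiff hinner hmeets hκ⟩

theorem stmt13 {S : Type u} {X : Type v} {Z : Type w}
    [AddCommMonoid X] [UniformSpace X] [T2Space X]
    [AddCommMonoid Z] [UniformSpace Z] [T2Space Z]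
    (hZadd : UniformContinuous fun p : Z × Z => p.1 + p.2)
    {𝒦 𝒢 : Set (Set S)} {ℬ : Set (Set X)} {ℱ : Set (S → X)}
    {𝒯 : Filter ((S → X) × (S → X))}
    (hRS : RieszSystem 𝒦 𝒢 ℬ ℱ 𝒯)
    (ℓ : (S → X) → Z) (hℓ : RieszIntegral 𝒦 𝒢 ℬ ℱ 𝒯 ℓ) :
    ∀ B ∈ ℬ, ∀ W : Set (Z × Z), IsUnifEnt Z W →
      (∀ γ ∈ 𝒢, ∃ κ' ∈ 𝒦, κ' ⊆ γ ∧ (γ \ κ') ∈ SWB 𝒦 𝒢 ℱ ℓ W B) ∧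
      ∀ κ ∈ 𝒦, ∃ γ' ∈ 𝒢, κ ⊆ γ' ∧ (γ' \ κ) ∈ SWB 𝒦 𝒢 ℱ ℓ W B :=
  stmt13_general hRS ℓ hℓ
end
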